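/- arXiv:1404.6632 — 2 statements merged into one kernel-verified Lean document; each statement's English description precedes it below -/
import Mathlib

section
/- Let M = (Q, Σ, δ, q₀, F) be a minimal DFA with |Q| = n > 2. Suppose P(M) is set-transitive and some nonempty word induces a transformation of Q of rank n − 1. Then for every S ⊆ Q the atom A_S is nonempty and has state complexity Ψ(n, |S|); that is, the recognized language is maximally atomic. -/
/-- `Psi n s` of Brzozowski–Tamm: the tight upper bound on the state complexity
of an atom `A_S` with `|S| = s` of a language of state complexity `n`. -/
def Psi (n s : ℕ) : ℕ :=
  if s = 0 ∨ s = n then 2 ^ n - 1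
  else 1 + ∑ k ∈ Finset.Icc 1 s, ∑ l ∈ Finset.Icc 1 (n - s),
    Nat.choose n k * Nat.choose (n - k) l

/-- The Myhill–Nerode right congruence of a language `K`. -/
def rightCong {A : Type*} (K : Set (List A)) : Setoid (List A) where
  r x y := ∀ z, x ++ z ∈ K ↔ y ++ z ∈ K
  iseqv := ⟨fun _ _ => Iff.rfl, fun h z => (h z).symm, fun h1 h2 z => (h1 z).trans (h2 z)⟩

/-- The state complexity of a language: the number of classes of its
Myhill–Nerode right congruence. -/
noncomputable def stateComplexity {A : Type*} (K : Set (List A)) : ℕ :=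
  Nat.card (Quotient (rightCong K))

/-- The atom `A_S` of the language of the DFA `M`. -/
def atom {A Q : Type*} (M : DFA A Q) (S : Set Q) : Set (List A) :=
  {w | ∀ q, M.evalFrom q w ∈ M.accept ↔ q ∈ S}

/-- A DFA is minimal iff all its states are reachable and pairwise distinguishable. -/
def IsMinimal {A Q : Type*} (M : DFA A Q) : Prop :=
  (∀ q, ∃ w : List A, M.evalFrom M.start w = q) ∧
  ∀ p q : Q, p ≠ q → ∃ w : List A,
    ¬(M.evalFrom p w ∈ M.accept ↔ M.evalFrom q w ∈ M.accept)

/-!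
Conjugating a rank `n - 1` transformation by permutations of `P(M)` and taking a suitable power
yields, for all states `a ≠ c`, the transformation sending `c` to `a` and fixing every other
state. Composites of these give every idempotent transformation, and an idempotent after a
permutation mapping `S` onto a set of the right size realises as `(f_w(S), f_w(Sᶜ))` every pair
of disjoint sets `(X, Y)` with `|X| ≤ |S|`, `|Y| ≤ |Sᶜ|`, `X` nonempty if `S` is and `Y`
nonempty if `Sᶜ` is. In particular every atom is nonempty; hence two words are Myhill–Nerode
equivalent for `A_S` exactly when they give the same such pair, or both give overlapping images.
Counting these pairs, plus the class of overlapping images when `∅ ≠ S ≠ Q`, gives `Ψ(n, |S|)`.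
-/

open Function

section SetLemmas

open Set

variable {α β : Type*}

theorem preimage_eq_iff_image_subset {f : α → β} {S : Set α} {T : Set β} :
    f ⁻¹' T = S ↔ f '' S ⊆ T ∧ f '' Sᶜ ⊆ Tᶜ := by
  rw [image_subset_iff, image_subset_iff, preimage_compl, compl_subset_compl,
    subset_antisymm_iff, and_comm]

theorem Set.ncard_image_mem_Icc [Finite α] (f : α → β) (S : Set α) :
    (f '' S).ncard ∈ Finset.Icc (min 1 S.ncard) S.ncard := by
  refine Finset.mem_Icc.mpr ⟨?_, ncard_image_le⟩
  obtain rfl | hS := S.eq_empty_or_nonempty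
  · simp
  · exact min_le_of_left_le ((ncard_pos).mpr (hS.image f))

open Classical in
theorem Set.ncard_eq_ncard_preimage_some_add [Finite α] (O : Set (Option α)) :
    O.ncard = (some ⁻¹' O).ncard + if none ∈ O then 1 else 0 := by
  rw [← ncard_image_of_injective _ (Option.some_injective α)]
  split_ifs with h
  · rw [← ncard_insert_of_notMem (a := none) (by simp)]
    congr 1
    ext (_ | a) <;> simp [h]
  · rw [add_zero]
    congr 1
    ext (_ | a) <;> simp [h]

open Classical in
noncomputable def pairCode (X Y : Set α) : Option (Set α × Set α) :=
  if Disjoint X Y then some (X, Y) else none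

theorem pairCode_eq_some_iff {X Y : Set α} {p : Set α × Set α} :
    pairCode X Y = some p ↔ Disjoint X Y ∧ (X, Y) = p := by
  unfold pairCode; split_ifs <;> simp [*]

theorem pairCode_eq_none_iff {X Y : Set α} : pairCode X Y = none ↔ ¬Disjoint X Y := by
  unfold pairCode; split_ifs <;> simp [*]

theorem subset_and_disjoint_of_forall_separating_iff {X Y X' Y' : Set α}
    (h : ∀ T, X ⊆ T ∧ Y ⊆ Tᶜ ↔ X' ⊆ T ∧ Y' ⊆ Tᶜ) (hXY : Disjoint X Y) :
    X' ⊆ X ∧ Y' ⊆ Y ∧ Disjoint X' Y' := by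
  obtain ⟨hX', hY'X⟩ := (h X).mp ⟨subset_rfl, subset_compl_iff_disjoint_left.mpr hXY⟩
  obtain ⟨-, hY'⟩ := (h Yᶜ).mp ⟨subset_compl_iff_disjoint_right.mpr hXY, (compl_compl Y).ge⟩
  exact ⟨hX', compl_compl Y ▸ hY', disjoint_of_subset hX' hY'X disjoint_compl_right⟩

theorem pairCode_eq_iff {X Y X' Y' : Set α} :
    pairCode X Y = pairCode X' Y' ↔ ∀ T, (X ⊆ T ∧ Y ⊆ Tᶜ ↔ X' ⊆ T ∧ Y' ⊆ Tᶜ) := by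
  refine ⟨fun h T => ?_, fun h => ?_⟩
  · by_cases hXY : Disjoint X Y
    · obtain ⟨-, hp⟩ := pairCode_eq_some_iff.mp (h.symm.trans (if_pos hXY))
      simp only [Prod.mk.injEq] at hp
      rw [hp.1, hp.2]
    · have hXY' := pairCode_eq_none_iff.mp (h.symm.trans (if_neg hXY))
      exact iff_of_false (fun ⟨h₁, h₂⟩ => hXY (disjoint_of_subset h₁ h₂ disjoint_compl_right))
        (fun ⟨h₁, h₂⟩ => hXY' (disjoint_of_subset h₁ h₂ disjoint_compl_right))
  have h' : ∀ T, X' ⊆ T ∧ Y' ⊆ Tᶜ ↔ X ⊆ T ∧ Y ⊆ Tᶜ := fun T => (h T).symm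
  by_cases hXY : Disjoint X Y
  · obtain ⟨hX', hY', hXY'⟩ := subset_and_disjoint_of_forall_separating_iff h hXY
    obtain ⟨hX, hY, -⟩ := subset_and_disjoint_of_forall_separating_iff h' hXY'
    rw [subset_antisymm hX hX', subset_antisymm hY hY']
  by_cases hXY' : Disjoint X' Y'
  · exact absurd (subset_and_disjoint_of_forall_separating_iff h' hXY').2.2 hXY
  rw [pairCode_eq_none_iff.mpr hXY, pairCode_eq_none_iff.mpr hXY']

end SetLemmas

section SelfMaps

open Set

variable {α β : Type*}

theorem exists_pos_iterate_eqOn_id [Finite α] {h : α → α} {s : Set α} (hmaps : MapsTo h s s)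
    (hinj : InjOn h s) : ∃ m, 0 < m ∧ EqOn h^[m] id s := by
  have hbij : Bijective (hmaps.restrict h s s) :=
    Finite.injective_iff_bijective.mp (hmaps.restrict_inj.mpr hinj)
  set e : Equiv.Perm s := Equiv.ofBijective _ hbij
  refine ⟨orderOf e, orderOf_pos e, fun x hx => ?_⟩
  have he : (e ^ orderOf e) ⟨x, hx⟩ = ⟨x, hx⟩ := by
    rw [pow_orderOf_eq_one, Equiv.Perm.one_apply]
  rw [Equiv.Perm.coe_pow] at he
  exact congrArg Subtype.val ((congrFun (hmaps.iterate_restrict _) _).symm.trans he)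

theorem injOn_compl_singleton_of_ncard_range [Finite α] {g : α → β}
    (hg : (range g).ncard = Nat.card α - 1) {x y : α} (hxy : x ≠ y) (hgxy : g x = g y) :
    InjOn g {x}ᶜ := by
  have himage : g '' {x}ᶜ = range g := by
    refine (image_subset_range _ _).antisymm ?_
    rintro _ ⟨z, rfl⟩
    obtain rfl | hz := eq_or_ne z x
    · exact ⟨y, hxy.symm, hgxy.symm⟩
    · exact ⟨z, hz, rfl⟩
  rw [← ncard_image_iff, himage, hg, ncard_compl, ncard_singleton]

theorem exists_idempotent_retraction {U V : Set α} (hUV : U ⊆ V)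
    (hU : V.Nonempty → U.Nonempty) :
    ∃ ρ : α → α, (∀ x, ρ (ρ x) = ρ x) ∧ ρ '' V = U ∧ EqOn ρ id Vᶜ := by
  classical
  obtain rfl | ⟨a, ha⟩ := U.eq_empty_or_nonempty
  · refine ⟨id, fun _ => rfl, ?_, fun _ _ => rfl⟩
    rw [image_id, ← not_nonempty_iff_eq_empty]
    exact fun hV => (hU hV).ne_empty rfl
  refine ⟨fun x => if x ∈ V \ U then a else x, fun x => ?_, ?_,
    fun x hx => if_neg fun h => hx h.1⟩
  · by_cases hx : x ∈ V \ U <;> simp [hx, ha]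
  · ext x
    constructor
    · rintro ⟨z, hz, rfl⟩
      by_cases hzU : z ∈ U <;> simp [hz, hzU, ha]
    · exact fun hx => ⟨x, hUV hx, if_neg fun h => h.2 hx⟩

end SelfMaps

section Counting

open Finset

variable {α : Type*} [Fintype α] [DecidableEq α]

theorem card_disjoint_finset_pairs (k l : ℕ) :
    #{p : Finset α × Finset α | Disjoint p.1 p.2 ∧ #p.1 = k ∧ #p.2 = l} =
      (Fintype.card α).choose k * (Fintype.card α - k).choose l := by
  rw [card_eq_sum_card_fiberwise (f := Prod.fst) (t := powersetCard k univ)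
    (fun p hp => by simp_all)]
  have hfiber : ∀ X ∈ powersetCard k (univ : Finset α),
      #{p ∈ {p : Finset α × Finset α | Disjoint p.1 p.2 ∧ #p.1 = k ∧ #p.2 = l} | p.1 = X} =
        (Fintype.card α - k).choose l := by
    intro X hX
    rw [mem_powersetCard_univ] at hX
    rw [← hX, ← card_compl, ← card_powersetCard]
    refine card_bij' (fun p _ => p.2) (fun Y _ => (X, Y)) (fun p hp => ?_) (fun Y hY => ?_)
      (fun p hp => ?_) (fun _ _ => rfl)
    · simp only [mem_filter] at hp
      rw [mem_powersetCard, subset_compl_iff_disjoint_left, ← hp.2]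
      exact ⟨hp.1.2.1, hp.1.2.2.2⟩
    · rw [mem_powersetCard, subset_compl_iff_disjoint_left] at hY
      simpa using hY
    · simp only [mem_filter] at hp
      rw [← hp.2]
  rw [sum_congr rfl hfiber, sum_const, card_powersetCard, card_univ, smul_eq_mul]

theorem card_disjoint_finset_pairs_Icc (a s b t : ℕ) :
    #{p : Finset α × Finset α | Disjoint p.1 p.2 ∧ #p.1 ∈ Icc a s ∧ #p.2 ∈ Icc b t} =
      ∑ k ∈ Icc a s, ∑ l ∈ Icc b t,
        (Fintype.card α).choose k * (Fintype.card α - k).choose l := by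
  rw [card_eq_sum_card_fiberwise (f := fun p => (#p.1, #p.2)) (t := Icc a s ×ˢ Icc b t)
    (fun p hp => by simp_all), sum_product]
  refine sum_congr rfl fun k hk => sum_congr rfl fun l hl => ?_
  rw [← card_disjoint_finset_pairs, filter_filter]
  congr 1
  refine filter_congr fun p _ => ?_
  simp only [Prod.mk.injEq]
  constructor
  · rintro ⟨⟨hd, -, -⟩, hk', hl'⟩
    exact ⟨hd, hk', hl'⟩
  · rintro ⟨hd, rfl, rfl⟩
    exact ⟨⟨hd, hk, hl⟩, rfl, rfl⟩

variable (α) in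
def boundedDisjointPairs (a s b t : ℕ) : Set (Set α × Set α) :=
  {p | Disjoint p.1 p.2 ∧ p.1.ncard ∈ Icc a s ∧ p.2.ncard ∈ Icc b t}

theorem ncard_boundedDisjointPairs (a s b t : ℕ) :
    (boundedDisjointPairs α a s b t).ncard =
      ∑ k ∈ Icc a s, ∑ l ∈ Icc b t,
        (Fintype.card α).choose k * (Fintype.card α - k).choose l := by
  let coePair : Finset α × Finset α → Set α × Set α := Prod.map (↑) (↑)
  have hinj : Injective coePair := coe_injective.prodMap coe_injective
  have hsurj : Surjective coePair :=
    Fintype.finsetEquivSet.surjective.prodMap Fintype.finsetEquivSet.surjective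
  rw [← Set.ncard_preimage_of_injective_subset_range hinj (hsurj.range_eq ▸ Set.subset_univ _),
    ← card_disjoint_finset_pairs_Icc, ← Set.ncard_coe_finset]
  congr 1
  ext p
  simp [coePair, boundedDisjointPairs]

end Counting

theorem sum_Icc_one_choose (n : ℕ) : ∑ k ∈ Finset.Icc 1 n, n.choose k = 2 ^ n - 1 := by
  rw [← Nat.sum_range_choose, Finset.range_eq_Ico, Finset.sum_eq_sum_Ico_succ_bot (by omega),
    Nat.choose_zero_right, Nat.add_sub_cancel_left]
  rfl

theorem Psi_eq_sum {n s : ℕ} (hn : 0 < n) (hs : s ≤ n) :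
    Psi n s = (∑ k ∈ Finset.Icc (min 1 s) s, ∑ l ∈ Finset.Icc (min 1 (n - s)) (n - s),
      n.choose k * (n - k).choose l) + if 0 < s ∧ s < n then 1 else 0 := by
  rcases Nat.eq_zero_or_pos s with rfl | hs₀
  · simp [Psi, Nat.one_le_iff_ne_zero.mpr hn.ne', sum_Icc_one_choose]
  rcases hs.eq_or_lt with rfl | hsn
  · simp [Psi, Nat.one_le_iff_ne_zero.mpr hn.ne', sum_Icc_one_choose]
  rw [Psi, if_neg (by omega), if_pos ⟨hs₀, hsn⟩, min_eq_left hs₀, min_eq_left (by omega),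
    add_comm]

theorem accept_nonempty_and_compl_nonempty_of_isMinimal {A Q : Type*} [Nontrivial Q]
    {M : DFA A Q} (hmin : IsMinimal M) : M.accept.Nonempty ∧ M.acceptᶜ.Nonempty := by
  obtain ⟨p, q, hpq⟩ := exists_pair_ne Q
  obtain ⟨w, hw⟩ := hmin.2 p q hpq
  by_cases hp : M.evalFrom p w ∈ M.accept
  · exact ⟨⟨_, hp⟩, ⟨_, fun hq => hw (iff_of_true hp hq)⟩⟩
  · exact ⟨⟨_, not_not.mp fun hq => hw (iff_of_false hp hq)⟩, ⟨_, hp⟩⟩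

namespace DFA

open Set

variable {A Q : Type*} (M : DFA A Q)

def transformation (w : List A) : Q → Q := fun q => M.evalFrom q w

def IsInduced (f : Q → Q) : Prop := ∃ w, M.transformation w = f

def IsSetTransitive : Prop :=
  ∀ X Y : Set Q, X.ncard = Y.ncard → ∃ f, M.IsInduced f ∧ Bijective f ∧ f '' X = Y

/-- The Myhill–Nerode class of `x` for the atom `A_S` (once all atoms are nonempty): the pair
`(f_x(S), f_x(Sᶜ))` if it is disjoint, and `none` for the words with no extension in `A_S`. -/
noncomputable def atomCode (S : Set Q) (x : List A) : Option (Set Q × Set Q) :=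
  pairCode (M.transformation x '' S) (M.transformation x '' Sᶜ)

variable {M}

theorem transformation_append (x z : List A) :
    M.transformation (x ++ z) = M.transformation z ∘ M.transformation x := by
  funext q
  simp [transformation, evalFrom_of_append]

theorem isInduced_transformation (w : List A) : M.IsInduced (M.transformation w) := ⟨w, rfl⟩

theorem isInduced_id : M.IsInduced id := ⟨[], rfl⟩

theorem IsInduced.comp {f g : Q → Q} (hg : M.IsInduced g) (hf : M.IsInduced f) :
    M.IsInduced (g ∘ f) := by
  obtain ⟨u, rfl⟩ := hf
  obtain ⟨v, rfl⟩ := hg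
  exact ⟨u ++ v, transformation_append u v⟩

theorem IsInduced.iterate {f : Q → Q} (hf : M.IsInduced f) : ∀ m : ℕ, M.IsInduced f^[m]
  | 0 => isInduced_id
  | m + 1 => (hf.iterate m).comp hf

theorem mem_atom_iff {S : Set Q} {w : List A} :
    w ∈ atom M S ↔ M.transformation w ⁻¹' M.accept = S :=
  Set.ext_iff.symm

theorem append_mem_atom_iff {S : Set Q} {x z : List A} :
    x ++ z ∈ atom M S ↔ M.transformation x '' S ⊆ M.transformation z ⁻¹' M.accept ∧
      M.transformation x '' Sᶜ ⊆ (M.transformation z ⁻¹' M.accept)ᶜ := by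
  rw [mem_atom_iff, transformation_append, preimage_comp, preimage_eq_iff_image_subset]

theorem rightCong_atom_eq_ker (hatoms : ∀ T, (atom M T).Nonempty) (S : Set Q) :
    rightCong (atom M S) = Setoid.ker (M.atomCode S) := by
  have hsurj : Surjective fun z => M.transformation z ⁻¹' M.accept := fun T =>
    (hatoms T).imp fun _ => mem_atom_iff.mp
  ext x y
  rw [Setoid.ker_def, atomCode, atomCode, pairCode_eq_iff, hsurj.forall]
  exact forall_congr' fun z => by rw [append_mem_atom_iff, append_mem_atom_iff]

theorem stateComplexity_atom (hatoms : ∀ T, (atom M T).Nonempty) (S : Set Q) :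
    stateComplexity (atom M S) = (range (M.atomCode S)).ncard := by
  rw [stateComplexity, rightCong_atom_eq_ker hatoms,
    Nat.card_congr (Setoid.quotientKerEquivRange _), Nat.card_coe_set_eq]

section Finite

variable [Finite Q] [DecidableEq Q]

theorem IsSetTransitive.isInduced_update_id (hST : M.IsSetTransitive) {g : Q → Q}
    (hg : M.IsInduced g) (hrank : (range g).ncard = Nat.card Q - 1) (a c : Q) :
    M.IsInduced (update id c a) := by
  obtain rfl | hac := eq_or_ne a c
  · rw [show update id a a = id from update_eq_self a id]
    exact isInduced_id
  have hQ : 0 < Nat.card Q := Nat.card_pos_iff.mpr ⟨⟨a⟩, inferInstance⟩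
  obtain ⟨p, q, hgpq, hpq⟩ : ∃ p q, g p = g q ∧ p ≠ q := by
    by_contra! hinj
    rw [← image_univ, ncard_image_of_injective _ hinj, ncard_univ] at hrank
    omega
  obtain ⟨r, hr⟩ : ∃ r, r ∉ range g := by
    by_contra! hsurj
    rw [eq_univ_of_forall hsurj, ncard_univ] at hrank
    omega
  obtain ⟨σ, hσ, hσbij, hσac⟩ := hST {a, c} {p, q} (by rw [ncard_pair hac, ncard_pair hpq])
  obtain ⟨π, hπ, hπbij, hπr⟩ := hST {r} {c} (by rw [ncard_singleton, ncard_singleton])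
  rw [image_singleton, singleton_eq_singleton_iff] at hπr
  have hσa : σ a ∈ ({p, q} : Set Q) := hσac ▸ mem_image_of_mem σ (mem_insert a {c})
  have hσc : σ c ∈ ({p, q} : Set Q) := hσac ▸ mem_image_of_mem σ (mem_insert_of_mem a rfl)
  have hgσ : g (σ c) = g (σ a) := by
    simp only [mem_insert_iff, mem_singleton_iff] at hσa hσc
    rcases hσa with h | h <;> rcases hσc with h' | h' <;> simp [h, h', hgpq]
  have hginj : InjOn g {σ c}ᶜ :=
    injOn_compl_singleton_of_ncard_range hrank (hσbij.injective.ne hac.symm) hgσ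
  -- `h` merges `a` with `c` and permutes `{c}ᶜ`, so a power of it fixes `{c}ᶜ` and sends `c`
  -- to where `a` goes, namely `a`.
  set h := π ∘ g ∘ σ
  have hmaps : MapsTo h {c}ᶜ {c}ᶜ := fun x _ hx =>
    hr ⟨σ x, hπbij.injective (hx.trans hπr.symm)⟩
  have hinj : InjOn h {c}ᶜ := fun x hx y hy hxy =>
    hσbij.injective (hginj (hσbij.injective.ne hx) (hσbij.injective.ne hy) (hπbij.injective hxy))
  obtain ⟨m, hm, hfix⟩ := exists_pos_iterate_eqOn_id hmaps hinj
  have hhac : h c = h a := by simp only [h, comp_apply, hgσ]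
  have hpow : update id c a = h^[m] := by
    funext x
    obtain rfl | hx := eq_or_ne x c
    · obtain ⟨k, rfl⟩ := Nat.exists_eq_succ_of_ne_zero hm.ne'
      rw [update_self, iterate_succ_apply, hhac, ← iterate_succ_apply, hfix hac, id]
    · rw [update_of_ne hx, hfix hx]
  rw [hpow]
  exact (hπ.comp (hg.comp hσ)).iterate m

theorem isInduced_of_idempotent (hcol : ∀ a c, M.IsInduced (update id c a)) {ρ : Q → Q}
    (hρ : ∀ x, ρ (ρ x) = ρ x) : M.IsInduced ρ := by
  have := Fintype.ofFinite Q
  suffices ∀ D : Finset Q, ∀ ρ : Q → Q, (∀ x, ρ (ρ x) = ρ x) → (∀ x ∉ D, ρ x = x) →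
      M.IsInduced ρ from this Finset.univ ρ hρ (by simp)
  intro D
  induction D using Finset.induction_on with
  | empty =>
    intro ρ _ hfix
    rw [show ρ = id from funext fun x => hfix x (Finset.notMem_empty x)]
    exact isInduced_id
  | insert c D _ ih =>
    intro ρ hρ hfix
    by_cases hc : ρ c = c
    · refine ih ρ hρ fun x hx => ?_
      obtain rfl | hxc := eq_or_ne x c
      · exact hc
      · exact hfix x (by simp [hx, hxc])
    -- `ρ` never takes the value `c`, so it factors through the map `ρ'` that fixes `c`.
    have hρc : ∀ x, ρ x ≠ c := fun x hx => hc (by rw [← hx, hρ])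
    set ρ' := update ρ c c
    have hρ' : ∀ x, ρ' (ρ' x) = ρ' x := by
      intro x
      obtain rfl | hxc := eq_or_ne x c
      · simp [ρ']
      · simp [ρ', update_of_ne hxc, update_of_ne (hρc x), hρ]
    have hfix' : ∀ x ∉ D, ρ' x = x := by
      intro x hx
      obtain rfl | hxc := eq_or_ne x c
      · simp [ρ']
      · rw [show ρ' x = ρ x from update_of_ne hxc _ _, hfix x (by simp [hx, hxc])]
    have hfactor : ρ = update id c (ρ c) ∘ ρ' := by
      funext x
      obtain rfl | hxc := eq_or_ne x c
      · simp [ρ']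
      · simp [ρ', update_of_ne hxc, update_of_ne (hρc x)]
    rw [hfactor]
    exact (hcol _ _).comp (ih ρ' hρ' hfix')

theorem none_mem_range_atomCode_iff (hcol : ∀ a c, M.IsInduced (update id c a)) (S : Set Q) :
    none ∈ range (M.atomCode S) ↔ S.Nonempty ∧ Sᶜ.Nonempty := by
  simp only [mem_range, atomCode, pairCode_eq_none_iff, not_disjoint_iff]
  constructor
  · rintro ⟨-, -, ⟨q, hq, -⟩, ⟨q', hq', -⟩⟩
    exact ⟨⟨q, hq⟩, ⟨q', hq'⟩⟩
  · rintro ⟨⟨q, hq⟩, ⟨q', hq'⟩⟩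
    obtain ⟨w, hw⟩ := isInduced_of_idempotent hcol (ρ := fun _ => q) fun _ => rfl
    exact ⟨w, q, ⟨q, hq, by rw [hw]⟩, ⟨q', hq', by rw [hw]⟩⟩

variable (hST : M.IsSetTransitive) (hcol : ∀ a c, M.IsInduced (update id c a))
include hST hcol

theorem exists_isInduced_image_eq_and_image_compl_eq {S X Y : Set Q} (hXY : Disjoint X Y)
    (hX : S.Nonempty → X.Nonempty) (hY : Sᶜ.Nonempty → Y.Nonempty)
    (hXS : X.ncard ≤ S.ncard) (hYS : Y.ncard ≤ Sᶜ.ncard) :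
    ∃ f, M.IsInduced f ∧ f '' S = X ∧ f '' Sᶜ = Y := by
  obtain ⟨X', hXX', hX'Y, hX'⟩ := exists_subsuperset_card_eq
    (subset_compl_iff_disjoint_right.mpr hXY) hXS (by
      have := ncard_add_ncard_compl S
      have := ncard_add_ncard_compl Y
      omega)
  obtain ⟨σ, hσ, hσbij, hσS⟩ := hST S X' hX'.symm
  have hσSc : σ '' Sᶜ = X'ᶜ := by rw [image_compl_eq hσbij, hσS]
  obtain ⟨ρ₁, hρ₁, hρ₁X', hρ₁fix⟩ :=
    exists_idempotent_retraction hXX' fun h => hX (hσS ▸ h).of_image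
  obtain ⟨ρ₂, hρ₂, hρ₂X', hρ₂fix⟩ :=
    exists_idempotent_retraction (subset_compl_comm.mp hX'Y) fun h => hY (hσSc ▸ h).of_image
  refine ⟨ρ₂ ∘ ρ₁ ∘ σ,
    (isInduced_of_idempotent hcol hρ₂).comp ((isInduced_of_idempotent hcol hρ₁).comp hσ), ?_, ?_⟩
  · rw [image_comp, image_comp, hσS, hρ₁X',
      (hρ₂fix.mono (by rwa [compl_compl])).image_eq_self]
  · rw [image_comp, image_comp, hσSc, hρ₁fix.image_eq_self, hρ₂X']

theorem atom_nonempty (hacc : M.accept.Nonempty) (hrej : M.acceptᶜ.Nonempty) (T : Set Q) :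
    (atom M T).Nonempty := by
  obtain ⟨y, hy⟩ := hacc
  obtain ⟨x, hx⟩ := hrej
  have hXY : Disjoint ((fun _ => y) '' T) ((fun _ => x) '' Tᶜ) :=
    disjoint_of_subset (image_subset_iff.mpr fun _ _ => mem_singleton y)
      (image_subset_iff.mpr fun _ _ => mem_singleton x)
      (disjoint_singleton.mpr (ne_of_mem_of_not_mem hy hx))
  obtain ⟨_, ⟨w, rfl⟩, hT, hTc⟩ := exists_isInduced_image_eq_and_image_compl_eq hST hcol hXY
    (Nonempty.image _) (Nonempty.image _) ncard_image_le ncard_image_le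
  refine ⟨w, mem_atom_iff.mpr (preimage_eq_iff_image_subset.mpr ⟨?_, ?_⟩)⟩
  · rw [hT]
    exact image_subset_iff.mpr fun _ _ => hy
  · rw [hTc]
    exact image_subset_iff.mpr fun _ _ => hx

theorem preimage_some_range_atomCode (S : Set Q) :
    some ⁻¹' range (M.atomCode S) =
      boundedDisjointPairs Q (min 1 S.ncard) S.ncard (min 1 Sᶜ.ncard) Sᶜ.ncard := by
  have hne : ∀ {Z W : Set Q}, Z.ncard ∈ Finset.Icc (min 1 W.ncard) W.ncard →
      W.Nonempty → Z.Nonempty := fun hZ hW => by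
    have := (ncard_pos).mpr hW
    exact nonempty_of_ncard_ne_zero (by simp at hZ; omega)
  ext ⟨X, Y⟩
  simp only [mem_preimage, mem_range, atomCode, pairCode_eq_some_iff]
  constructor
  · rintro ⟨w, hdisj, hw⟩
    rw [← hw]
    exact ⟨hdisj, ncard_image_mem_Icc _ _, ncard_image_mem_Icc _ _⟩
  · rintro ⟨hXY, hX, hY⟩
    obtain ⟨_, ⟨w, rfl⟩, hS, hSc⟩ := exists_isInduced_image_eq_and_image_compl_eq hST hcol hXY
      (hne hX) (hne hY) (Finset.mem_Icc.mp hX).2 (Finset.mem_Icc.mp hY).2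
    exact ⟨w, hS ▸ hSc ▸ hXY, by rw [hS, hSc]⟩

end Finite

theorem stateComplexity_atom_eq_Psi [Fintype Q] [DecidableEq Q] [Nonempty Q]
    (hST : M.IsSetTransitive) (hcol : ∀ a c, M.IsInduced (update id c a))
    (hatoms : ∀ T, (atom M T).Nonempty) (S : Set Q) :
    stateComplexity (atom M S) = Psi (Fintype.card Q) S.ncard := by
  have hS : S.ncard ≤ Fintype.card Q := (ncard_le_card S).trans_eq Nat.card_eq_fintype_card
  have hSc : Sᶜ.ncard = Fintype.card Q - S.ncard := by
    rw [ncard_compl, Nat.card_eq_fintype_card]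
  have hmiddle : S.Nonempty ∧ Sᶜ.Nonempty ↔ 0 < S.ncard ∧ S.ncard < Fintype.card Q := by
    rw [← ncard_pos, ← ncard_pos, hSc]
    omega
  rw [stateComplexity_atom hatoms, ncard_eq_ncard_preimage_some_add,
    preimage_some_range_atomCode hST hcol, ncard_boundedDisjointPairs,
    none_mem_range_atomCode_iff hcol, Psi_eq_sum Fintype.card_pos hS, hSc]
  simp only [hmiddle]

end DFA

theorem statement9_general {A Q : Type*} [Fintype Q] (M : DFA A Q)
    (n : ℕ) (hQ : Fintype.card Q = n) (hn : 2 < n) (hmin : IsMinimal M)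
    (htrans : ∀ k : ℕ, 1 ≤ k → k ≤ n → ∀ X Y : Set Q, X.ncard = k → Y.ncard = k →
      ∃ w : List A, Function.Bijective (fun q => M.evalFrom q w) ∧
        (fun q => M.evalFrom q w) '' X = Y)
    (hrank : ∃ w : List A, w ≠ [] ∧
      (Set.range (fun q => M.evalFrom q w)).ncard = n - 1) :
    ∀ S : Set Q, (atom M S).Nonempty ∧
      stateComplexity (atom M S) = Psi n S.ncard := by
  classical
  have : Nontrivial Q := Fintype.one_lt_card_iff_nontrivial.mp (by omega)
  have hST : M.IsSetTransitive := by
    intro X Y hXY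
    obtain hX | hX := Nat.eq_zero_or_pos X.ncard
    · rw [(Set.ncard_eq_zero (s := X)).mp hX, (Set.ncard_eq_zero (s := Y)).mp (hXY ▸ hX)]
      exact ⟨id, DFA.isInduced_id, bijective_id, Set.image_empty _⟩
    · have hXn : X.ncard ≤ n := hQ ▸ (Set.ncard_le_card X).trans_eq Nat.card_eq_fintype_card
      obtain ⟨w, hw⟩ := htrans X.ncard hX hXn X Y rfl hXY.symm
      exact ⟨_, DFA.isInduced_transformation w, hw⟩
  obtain ⟨w, -, hw⟩ := hrank
  have hcol := hST.isInduced_update_id (DFA.isInduced_transformation w)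
    (by rw [Nat.card_eq_fintype_card, hQ]; exact hw)
  obtain ⟨hacc, hrej⟩ := accept_nonempty_and_compl_nonempty_of_isMinimal hmin
  have hatoms := DFA.atom_nonempty hST hcol hacc hrej
  exact fun S => ⟨hatoms S, hQ ▸ DFA.stateComplexity_atom_eq_Psi hST hcol hatoms S⟩

/-- if `P(M)` is set-transitive and some nonempty word induces a
transformation of rank `n - 1`, where `M` is a minimal DFA with `n > 2` states,
then every atom `A_S` is nonempty and has state complexity `Ψ(n, |S|)`,
i.e. the recognized language is maximally atomic. -/
theorem statement9 {A Q : Type*} [Fintype A] [Fintype Q] (M : DFA A Q)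
    (n : ℕ) (hQ : Fintype.card Q = n) (hn : 2 < n) (hmin : IsMinimal M)
    (htrans : ∀ k : ℕ, 1 ≤ k → k ≤ n → ∀ X Y : Set Q, X.ncard = k → Y.ncard = k →
      ∃ w : List A, Function.Bijective (fun q => M.evalFrom q w) ∧
        (fun q => M.evalFrom q w) '' X = Y)
    (hrank : ∃ w : List A, w ≠ [] ∧
      (Set.range (fun q => M.evalFrom q w)).ncard = n - 1) :
    ∀ S : Set Q, (atom M S).Nonempty ∧
      stateComplexity (atom M S) = Psi n S.ncard :=
  statement9_general M n hQ hn hmin htrans hrank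
end

section
/- Let M = (Q, Σ, δ, q₀, F) be a minimal DFA with |Q| = n ≥ 3, and suppose some word w₀ induces a transformation of Q of rank n − 1. Let X ⊆ Q with 1 < |X| < n be such that A_X is nonempty and has state complexity Ψ(n, |X|). Then there exists Z ⊆ Q with |Z| = |X| − 1 such that A_Z is nonempty. -/
/-!
A left quotient `u⁻¹ A_X` is either empty or the set of words accepted from every state of
`u X` and rejected from every state of `u Xᶜ`; the pair `(u X, u Xᶜ)` consists of disjoint
nonempty sets of sizes at most `|X|` and `n - |X|`, and `Ψ(n, |X|)` is one more than the number
of such pairs. Maximal complexity therefore forces every such pair to be realised by a word; in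
particular every atom `A_S` with `|S| = |X|` is nonempty.

If `w₀` misses the state `m` and merges `p₁ ≠ p₂`, pick `Z` of size `|X| - 1` avoiding
`p₁, p₂` and put `S = {m} ∪ w₀ Z`. Since `w₀` is injective off `p₂`, the preimage of `S`
under `w₀` is exactly `Z`, so `w₀` followed by any word of `A_S` lies in `A_Z`.
-/

open Finset

section

variable {A Q : Type*}

theorem stateComplexity_eq_card_range (K : Set (List A)) :
    stateComplexity K = Nat.card (Set.range fun u : List A => {z | u ++ z ∈ K}) :=
  Nat.card_congr <| Equiv.ofBijective
    (Quotient.lift (fun u => ⟨{z | u ++ z ∈ K}, u, rfl⟩) fun _ _ h => Subtype.ext (Set.ext h))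
    ⟨fun a b => Quotient.inductionOn₂ a b fun _ _ h =>
        Quotient.sound (Set.ext_iff.mp (congrArg Subtype.val h)),
     fun ⟨_, u, hu⟩ => ⟨⟦u⟧, Subtype.ext hu⟩⟩

theorem Psi_of_pos_of_lt {n s : ℕ} (h0 : 0 < s) (hn : s < n) :
    Psi n s = 1 + ∑ k ∈ Icc 1 s, ∑ l ∈ Icc 1 (n - s), n.choose k * (n - k).choose l := by
  rw [Psi, if_neg (by omega)]

theorem append_mem_atom {M : DFA A Q} {S Z : Set Q} {w z : List A}
    (hw : ∀ q, M.evalFrom q w ∈ S ↔ q ∈ Z) (hz : z ∈ atom M S) : w ++ z ∈ atom M Z := by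
  intro q
  rw [DFA.evalFrom_of_append, hz, hw]

variable [Fintype Q] [DecidableEq Q]

def disjointPairs (s t : ℕ) : Finset (Finset Q × Finset Q) :=
  {v : Finset Q × Finset Q |
    v.1.Nonempty ∧ v.2.Nonempty ∧ Disjoint v.1 v.2 ∧ #v.1 ≤ s ∧ #v.2 ≤ t}

theorem card_disjointPairs_le (s t : ℕ) :
    #(disjointPairs (Q := Q) s t) ≤ ∑ k ∈ Icc 1 s, ∑ l ∈ Icc 1 t,
      (Fintype.card Q).choose k * (Fintype.card Q - k).choose l := by
  have hsub : disjointPairs (Q := Q) s t ⊆ (Icc 1 s).biUnion fun k =>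
      (powersetCard k (univ : Finset Q)).biUnion fun P =>
        (Icc 1 t).biUnion fun l => (powersetCard l Pᶜ).image (P, ·) := by
    rintro ⟨P, N⟩ hv
    obtain ⟨hP, hN, hPN, hPs, hNt⟩ := (mem_filter.mp hv).2
    simp only [mem_biUnion, mem_Icc, mem_powersetCard, mem_image]
    exact ⟨#P, ⟨hP.card_pos, hPs⟩, P, ⟨subset_univ P, rfl⟩, #N, ⟨hN.card_pos, hNt⟩, N,
      ⟨subset_compl_iff_disjoint_left.mpr hPN, rfl⟩, rfl⟩
  refine (card_le_card hsub).trans <| card_biUnion_le.trans <| sum_le_sum fun k _ => ?_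
  calc _ ≤ ∑ P ∈ powersetCard k (univ : Finset Q), ∑ l ∈ Icc 1 t,
          (Fintype.card Q - k).choose l :=
        card_biUnion_le.trans <| sum_le_sum fun P hP => card_biUnion_le.trans <|
          sum_le_sum fun l _ => card_image_le.trans_eq <| by
            rw [card_powersetCard, card_compl, (mem_powersetCard.mp hP).2]
    _ = _ := by rw [sum_const, card_powersetCard, card_univ, smul_eq_mul, mul_sum]

def pairLang (M : DFA A Q) (P N : Finset Q) : Set (List A) :=
  {z | (∀ p ∈ P, M.evalFrom p z ∈ M.accept) ∧ ∀ p ∈ N, M.evalFrom p z ∉ M.accept}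

theorem atom_eq_pairLang (M : DFA A Q) (S : Finset Q) : atom M S = pairLang M S Sᶜ := by
  ext z
  simp only [atom, pairLang, Set.mem_ofPred_eq, mem_coe, mem_compl]
  exact ⟨fun h => ⟨fun p hp => (h p).2 hp, fun p hp hacc => hp ((h p).1 hacc)⟩,
    fun h q => ⟨fun hacc => by_contra fun hq => h.2 q hq hacc, h.1 q⟩⟩

theorem leftQuotient_atom (M : DFA A Q) (S : Finset Q) (u : List A) :
    {z | u ++ z ∈ atom M S} =
      pairLang M (S.image (M.evalFrom · u)) (Sᶜ.image (M.evalFrom · u)) := by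
  ext z
  rw [Set.mem_ofPred_eq, atom_eq_pairLang]
  simp only [pairLang, Set.mem_ofPred_eq, forall_mem_image, DFA.evalFrom_of_append]

open scoped Classical in
theorem stateComplexity_atom_le (M : DFA A Q) {X : Finset Q} (hX : X.Nonempty)
    (hXc : Xᶜ.Nonempty) :
    stateComplexity (atom M X) ≤
      1 + #{v ∈ disjointPairs #X #Xᶜ | (pairLang M v.1 v.2).Nonempty} := by
  set F := {v ∈ disjointPairs (Q := Q) #X #Xᶜ | (pairLang M v.1 v.2).Nonempty}
  have hsub : (Set.range fun u : List A => {z | u ++ z ∈ atom M X}) ⊆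
      ↑(insert ∅ (F.image fun v => pairLang M v.1 v.2)) := by
    rintro _ ⟨u, rfl⟩
    simp only [SetLike.mem_coe, leftQuotient_atom]
    set f := (M.evalFrom · u)
    rcases Set.eq_empty_or_nonempty (pairLang M (X.image f) (Xᶜ.image f)) with hemp | hne
    · exact hemp ▸ mem_insert_self _ _
    · refine mem_insert_of_mem <|
        mem_image.mpr ⟨(X.image f, Xᶜ.image f), mem_filter.mpr ⟨?_, hne⟩, rfl⟩
      obtain ⟨z, hacc, hrej⟩ := hne
      exact mem_filter.mpr ⟨mem_univ _, hX.image f, hXc.image f,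
        disjoint_left.mpr fun q hq hq' => hrej q hq' (hacc q hq), card_image_le, card_image_le⟩
  rw [stateComplexity_eq_card_range, Nat.card_coe_set_eq]
  calc _ ≤ #(insert ∅ (F.image fun v => pairLang M v.1 v.2)) := by
        rw [← Set.ncard_coe_finset]; exact Set.ncard_le_ncard hsub
    _ ≤ 1 + #F := (card_insert_le _ _).trans (by rw [add_comm]; gcongr; exact card_image_le)

theorem pairLang_nonempty_of_stateComplexity_eq_Psi (M : DFA A Q) {X : Finset Q}
    (hX : 0 < #X) (hXQ : #X < Fintype.card Q)
    (hsc : stateComplexity (atom M X) = Psi (Fintype.card Q) #X) {v : Finset Q × Finset Q}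
    (hv : v ∈ disjointPairs #X (Fintype.card Q - #X)) : (pairLang M v.1 v.2).Nonempty := by
  classical
  have hXc : #Xᶜ = Fintype.card Q - #X := card_compl X
  have hle := stateComplexity_atom_le M (card_pos.mp hX) (card_pos.mp (by omega))
  rw [hsc, Psi_of_pos_of_lt hX hXQ, hXc] at hle
  have hcard := card_disjointPairs_le (Q := Q) #X (Fintype.card Q - #X)
  exact filter_card_eq (p := fun v => (pairLang M v.1 v.2).Nonempty)
    (le_antisymm (card_filter_le _ _) (by omega)) v hv

theorem atom_nonempty_of_stateComplexity_eq_Psi (M : DFA A Q) {X : Finset Q}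
    (hX : 0 < #X) (hXQ : #X < Fintype.card Q)
    (hsc : stateComplexity (atom M X) = Psi (Fintype.card Q) #X) {S : Finset Q}
    (hS : #S = #X) : (atom M S).Nonempty := by
  have hSc : #Sᶜ = Fintype.card Q - #X := by rw [card_compl, hS]
  rw [atom_eq_pairLang]
  exact pairLang_nonempty_of_stateComplexity_eq_Psi M hX hXQ hsc (v := (S, Sᶜ)) <|
    mem_filter.mpr ⟨mem_univ _, card_pos.mp (hS ▸ hX), (card_pos (s := Sᶜ)).mp (by omega),
      disjoint_compl_right, hS.le, hSc.le⟩

theorem injOn_erase_of_card_image_eq_pred {g : Q → Q}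
    (hg : #(univ.image g) = Fintype.card Q - 1) {p₁ p₂ : Q} (hp : p₁ ≠ p₂)
    (hgp : g p₁ = g p₂) : Set.InjOn g (univ.erase p₂) := by
  have himage : (univ.erase p₂).image g = univ.image g := by
    refine (image_subset_image (erase_subset _ _)).antisymm fun y hy => ?_
    obtain ⟨q, -, rfl⟩ := mem_image.mp hy
    obtain rfl | hq := eq_or_ne q p₂
    · exact hgp ▸ mem_image_of_mem g (mem_erase.mpr ⟨hp, mem_univ _⟩)
    · exact mem_image_of_mem g (mem_erase.mpr ⟨hq, mem_univ _⟩)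
  rw [← card_image_iff, himage, hg, card_erase_of_mem (mem_univ _), card_univ]

theorem exists_card_preimage_eq_pred {g : Q → Q}
    (hg : (Set.range g).ncard = Fintype.card Q - 1) {j : ℕ} (hj : j + 2 ≤ Fintype.card Q) :
    ∃ S Z : Finset Q, #S = j + 1 ∧ #Z = j ∧ ∀ q, g q ∈ S ↔ q ∈ Z := by
  replace hg : #(univ.image g) = Fintype.card Q - 1 := by
    rwa [Set.ncard_eq_toFinset_card', Set.toFinset_range] at hg
  obtain ⟨m, -, hm⟩ := exists_mem_notMem_of_card_lt_card (s := univ.image g) (t := univ)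
    (by rw [hg, card_univ]; omega)
  obtain ⟨p₁, p₂, hgp, hp⟩ : ∃ p₁ p₂, g p₁ = g p₂ ∧ p₁ ≠ p₂ := by
    by_contra! h
    have := card_image_of_injective univ fun p₁ p₂ => h p₁ p₂
    rw [hg, card_univ] at this
    omega
  have hinj := injOn_erase_of_card_image_eq_pred hg hp hgp
  obtain ⟨Z, hZ, hZj⟩ := exists_subset_card_eq (s := (univ.erase p₁).erase p₂) (n := j) (by
    rw [card_erase_of_mem (mem_erase.mpr ⟨hp.symm, mem_univ _⟩),
      card_erase_of_mem (mem_univ _), card_univ]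
    omega)
  have hZ₂ : Z ⊆ univ.erase p₂ := fun q hq =>
    mem_erase.mpr ⟨(mem_erase.mp (hZ hq)).1, mem_univ _⟩
  refine ⟨insert m (Z.image g), Z, ?_, hZj, fun q => ?_⟩
  · rw [card_insert_of_notMem fun h => hm (image_subset_image (subset_univ Z) h),
      card_image_of_injOn (hinj.mono hZ₂), hZj]
  · have hgq : g q ≠ m := fun h => hm (h ▸ mem_image_of_mem g (mem_univ q))
    rw [mem_insert, or_iff_right hgq, mem_image]
    refine ⟨fun ⟨z, hz, hgz⟩ => ?_, fun hq => ⟨q, hq, rfl⟩⟩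
    obtain rfl | hq := eq_or_ne q p₂
    · exact absurd (hinj (hZ₂ hz) (mem_erase.mpr ⟨hp, mem_univ _⟩) (hgz.trans hgp.symm))
        (mem_erase.mp (mem_erase.mp (hZ hz)).2).1
    · exact hinj (hZ₂ hz) (mem_erase.mpr ⟨hq, mem_univ _⟩) hgz ▸ hz

end

theorem statement14_general {A Q : Type*} [Fintype Q] (M : DFA A Q)
    (n : ℕ) (hQ : Fintype.card Q = n)
    (w₀ : List A) (hrank : (Set.range (fun q => M.evalFrom q w₀)).ncard = n - 1)
    (X : Set Q) (hX1 : 1 < X.ncard) (hX2 : X.ncard < n)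
    (hsc : stateComplexity (atom M X) = Psi n X.ncard) :
    ∃ Z : Set Q, Z.ncard = X.ncard - 1 ∧ (atom M Z).Nonempty := by
  classical
  subst hQ
  obtain ⟨X, rfl⟩ := X.toFinite.exists_finset_coe
  rw [Set.ncard_coe_finset] at hX1 hX2 hsc ⊢
  obtain ⟨S, Z, hS, hZ, hSZ⟩ := exists_card_preimage_eq_pred hrank (j := #X - 1) (by omega)
  obtain ⟨z, hz⟩ := atom_nonempty_of_stateComplexity_eq_Psi M (by omega) hX2 hsc (S := S)
    (by omega)
  exact ⟨Z, by rw [Set.ncard_coe_finset, hZ], w₀ ++ z,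
    append_mem_atom (by simpa using hSZ) hz⟩

/-- in a minimal DFA with `n ≥ 3` states having a word inducing a
transformation of rank `n - 1`, if `A_X` with `1 < |X| < n` is a nonempty atom
of maximal state complexity, then some `A_Z` with `|Z| = |X| - 1` is a nonempty
atom. -/
theorem statement14 {A Q : Type*} [Fintype A] [Fintype Q] (M : DFA A Q)
    (n : ℕ) (hQ : Fintype.card Q = n) (hn : 3 ≤ n) (hmin : IsMinimal M)
    (w₀ : List A) (hrank : (Set.range (fun q => M.evalFrom q w₀)).ncard = n - 1)
    (X : Set Q) (hX1 : 1 < X.ncard) (hX2 : X.ncard < n)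
    (hne : (atom M X).Nonempty)
    (hsc : stateComplexity (atom M X) = Psi n X.ncard) :
    ∃ Z : Set Q, Z.ncard = X.ncard - 1 ∧ (atom M Z).Nonempty :=
  statement14_general M n hQ w₀ hrank X hX1 hX2 hsc
end
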